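/- arXiv:1908.00149 — 2 statements merged into one kernel-verified Lean document; each statement's English description precedes it below -/
import Mathlib

section
/- Under the setup of the previous lemma, if a demand point j satisfies b_j ≤ r_{ij} for all facilities i ∈ I, then there exists an optimal solution in which x*_{i^B j} = 1 and x*_{ij} = 0 for all i ≠ i^B. -/
open Finset

variable {I J : Type*}

/-- Objective: total number of opened server slots `Σ_{i,d} y_{id}`. -/
def obj [Fintype I] (D : ℕ) (y : I → ℕ → Bool) : ℝ :=
  ∑ i : I, ∑ d ∈ Finset.Icc 1 D, (if y i d then (1 : ℝ) else 0)

/-- Assignment, linking, ordering, capacity and baseline-open constraints. -/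
def FeasBase [Fintype I] [Fintype J] (iB : I) (D : ℕ) (f : J → ℝ)
    (cap : I → (I → ℕ → Bool) → ℝ) (x : I → J → ℝ) (y : I → ℕ → Bool) : Prop :=
  (∀ j, ∑ i : I, x i j = 1) ∧
  (∀ i j, 0 ≤ x i j ∧ x i j ≤ (if y i 1 then (1 : ℝ) else 0)) ∧
  (∀ i d, 2 ≤ d → d ≤ D → y i d = true → y i (d - 1) = true) ∧
  (∀ i, i ≠ iB → ∑ j : J, f j * x i j ≤ cap i y) ∧
  y iB 1 = true

/-- Average response time of an assignment. -/
noncomputable def avgRT [Fintype I] [Fintype J] (r : I → J → ℝ) (x : I → J → ℝ) : ℝ :=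
  (Fintype.card J : ℝ)⁻¹ * ∑ j : J, ∑ i : I, r i j * x i j

/-- Feasibility for the response-time model. -/
def FeasRT [Fintype I] [Fintype J] (iB : I) (D : ℕ) (f : J → ℝ)
    (cap : I → (I → ℕ → Bool) → ℝ) (r : I → J → ℝ) (b : J → ℝ) (γ : ℝ)
    (x : I → J → ℝ) (y : I → ℕ → Bool) : Prop :=
  FeasBase iB D f cap x y ∧
  avgRT r x ≤ (Fintype.card J : ℝ)⁻¹ * ∑ j : J, b j - γ

/-- Optimality for the response-time model. -/
def OptRT [Fintype I] [Fintype J] (iB : I) (D : ℕ) (f : J → ℝ)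
    (cap : I → (I → ℕ → Bool) → ℝ) (r : I → J → ℝ) (b : J → ℝ) (γ : ℝ)
    (x : I → J → ℝ) (y : I → ℕ → Bool) : Prop :=
  FeasRT iB D f cap r b γ x y ∧
  ∀ x' y', FeasRT iB D f cap r b γ x' y' → obj D y ≤ obj D y'

theorem stmt8 [Fintype I] [Fintype J] [Nonempty J]
    (iB : I) (D : ℕ) (hD : 1 ≤ D)
    (r : I → J → ℝ) (hr : ∀ i j, 0 ≤ r i j)
    (b : J → ℝ) (hb : ∀ j, b j = r iB j)
    (f : J → ℝ) (hf : ∀ j, 0 ≤ f j)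
    (cap : I → (I → ℕ → Bool) → ℝ)
    (hcap : ∀ i (y y' : I → ℕ → Bool),
      (∀ i' d, y i' d = true → y' i' d = true) → cap i y ≤ cap i y')
    (γ : ℝ)
    (hex : ∃ x y, OptRT iB D f cap r b γ x y)
    (j₀ : J) (hdom : ∀ i, b j₀ ≤ r i j₀) :
    ∃ x y, OptRT iB D f cap r b γ x y ∧ x iB j₀ = 1 ∧ ∀ i, i ≠ iB → x i j₀ = 0 := by
  classical
  obtain ⟨x, y, ⟨⟨hbase, havg⟩, hopt⟩⟩ := hex
  obtain ⟨hsum, hbnd, hord, hc, hB⟩ := hbase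
  set x' : I → J → ℝ := fun i j => if j = j₀ then (if i = iB then 1 else 0) else x i j with hx'
  have hx'j₀ : ∀ i, x' i j₀ = (if i = iB then (1:ℝ) else 0) := fun i => by simp [hx']
  have hx'ne : ∀ i j, j ≠ j₀ → x' i j = x i j := fun i j hj => by simp [hx', hj]
  have hle : ∀ i j, x' i j ≤ x i j ∨ j = j₀ := by
    intro i j
    by_cases hj : j = j₀
    · right; exact hj
    · left; rw [hx'ne i j hj]
  have key : ∑ i : I, r i j₀ * x' i j₀ ≤ ∑ i : I, r i j₀ * x i j₀ := by
    have h1 : ∑ i : I, r i j₀ * x' i j₀ = r iB j₀ := by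
      simp [hx'j₀, mul_ite, Finset.sum_ite_eq']
    have h2 : b j₀ ≤ ∑ i : I, r i j₀ * x i j₀ := by
      calc b j₀ = ∑ i : I, b j₀ * x i j₀ := by
            rw [← Finset.mul_sum, hsum j₀, mul_one]
        _ ≤ ∑ i : I, r i j₀ * x i j₀ :=
            Finset.sum_le_sum fun i _ =>
              mul_le_mul_of_nonneg_right (hdom i) (hbnd i j₀).1
    rw [h1, ← hb j₀]; exact h2
  refine ⟨x', y, ⟨⟨⟨?_, ?_, hord, ?_, hB⟩, ?_⟩, fun x'' y'' h => hopt x'' y'' h⟩, ?_, ?_⟩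
  · intro j
    by_cases hj : j = j₀
    · subst hj; simp [hx'j₀]
    · simp only [hx'ne _ j hj]; exact hsum j
  · intro i j
    by_cases hj : j = j₀
    · subst hj; rw [hx'j₀]
      by_cases hi : i = iB
      · subst hi; simp [hB]
      · simp [hi]; split <;> norm_num
    · rw [hx'ne i j hj]; exact hbnd i j
  · intro i hi
    refine le_trans (Finset.sum_le_sum fun j _ => ?_) (hc i hi)
    by_cases hj : j = j₀
    · subst hj; rw [hx'j₀, if_neg hi, mul_zero]
      exact mul_nonneg (hf _) (hbnd i _).1
    · rw [hx'ne i j hj]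
  · refine le_trans ?_ havg
    unfold avgRT
    refine mul_le_mul_of_nonneg_left ?_ (by positivity)
    refine Finset.sum_le_sum fun j _ => ?_
    by_cases hj : j = j₀
    · subst hj; exact key
    · exact le_of_eq (Finset.sum_congr rfl fun i _ => by rw [hx'ne i j hj])
  · simp [hx'j₀]
  · intro i hi; simp [hx'j₀, hi]
end

section
/- The response time model (minimizing Σ y_{id} subject to the average response-time constraint (1/n) Σ_j Σ_i r_{ij} x_{ij} ≤ (1/n) Σ_j b_j − γ and feasibility constraints x ∈ X(y), y ∈ Y) and the response time improvement model (same objective and feasibility constraints but with constraint (1/n) Σ_j Σ_i t_{ij} x_{ij} ≥ γ, where t_{ij} = max(b_j − r_{ij}, 0)) have the same optimal value: a solution is optimal for one if and only if some solution with the same y is optimal for the other. -/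
open Finset

variable {I J : Type*}

/-- Average response-time improvement, with `t_{ij} = max (b_j - r_{ij}) 0`. -/
noncomputable def avgImp [Fintype I] [Fintype J] (r : I → J → ℝ) (b : J → ℝ) (x : I → J → ℝ) : ℝ :=
  (Fintype.card J : ℝ)⁻¹ * ∑ j : J, ∑ i : I, max (b j - r i j) 0 * x i j

/-- Feasibility for the response-time improvement model. -/
def FeasI [Fintype I] [Fintype J] (iB : I) (D : ℕ) (f : J → ℝ)
    (cap : I → (I → ℕ → Bool) → ℝ) (r : I → J → ℝ) (b : J → ℝ) (γ : ℝ)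
    (x : I → J → ℝ) (y : I → ℕ → Bool) : Prop :=
  FeasBase iB D f cap x y ∧ γ ≤ avgImp r b x

/-- Optimality for the response-time improvement model. -/
def OptI [Fintype I] [Fintype J] (iB : I) (D : ℕ) (f : J → ℝ)
    (cap : I → (I → ℕ → Bool) → ℝ) (r : I → J → ℝ) (b : J → ℝ) (γ : ℝ)
    (x : I → J → ℝ) (y : I → ℕ → Bool) : Prop :=
  FeasI iB D f cap r b γ x y ∧
  ∀ x' y', FeasI iB D f cap r b γ x' y' → obj D y ≤ obj D y'


section Aux

open Classical in
/-- Reroute all flow from non-baseline facilities with `b j < r i j` to the baseline. -/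
noncomputable def fixx [Fintype I] (iB : I) (r : I → J → ℝ) (b : J → ℝ)
    (x : I → J → ℝ) : I → J → ℝ :=
  fun i j => if i = iB then
      x iB j + ∑ i' ∈ (Finset.univ.erase iB).filter (fun i' => b j < r i' j), x i' j
    else if b j < r i j then 0 else x i j

open Classical in
lemma sum_w_fixx [Fintype I] (iB : I) (r : I → J → ℝ) (b : J → ℝ)
    (x : I → J → ℝ) (j : J) (w : I → ℝ) :
    ∑ i : I, w i * fixx iB r b x i j
      = ∑ i : I, w i * x i j
        + ∑ i' ∈ (Finset.univ.erase iB).filter (fun i' => b j < r i' j),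
            (w iB - w i') * x i' j := by
  classical
  set s := (Finset.univ.erase iB).filter (fun i' => b j < r i' j) with hs
  have h1 : ∑ i : I, w i * fixx iB r b x i j
      = w iB * fixx iB r b x iB j + ∑ i ∈ Finset.univ.erase iB, w i * fixx iB r b x i j :=
    (Finset.add_sum_erase _ _ (Finset.mem_univ iB)).symm
  have h2 : ∑ i : I, w i * x i j
      = w iB * x iB j + ∑ i ∈ Finset.univ.erase iB, w i * x i j :=
    (Finset.add_sum_erase _ _ (Finset.mem_univ iB)).symm
  have hfixB : fixx iB r b x iB j = x iB j + ∑ i' ∈ s, x i' j := by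
    simp [fixx, hs]
  have hfixne : ∀ i ∈ Finset.univ.erase iB, w i * fixx iB r b x i j
      = if b j < r i j then 0 else w i * x i j := by
    intro i hi
    have hne : i ≠ iB := Finset.ne_of_mem_erase hi
    simp only [fixx, if_neg hne]
    split_ifs <;> simp
  have h3 : ∑ i ∈ Finset.univ.erase iB, w i * x i j
      = ∑ i ∈ s, w i * x i j
        + ∑ i ∈ (Finset.univ.erase iB).filter (fun i => ¬ b j < r i j), w i * x i j := by
    rw [hs]; exact (Finset.sum_filter_add_sum_filter_not _ _ _).symm
  have h4 : ∑ i' ∈ s, (w iB - w i') * x i' j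
      = w iB * ∑ i' ∈ s, x i' j - ∑ i' ∈ s, w i' * x i' j := by
    rw [Finset.mul_sum, ← Finset.sum_sub_distrib]
    exact Finset.sum_congr rfl fun i _ => by ring
  rw [h1, h2, Finset.sum_congr rfl hfixne, Finset.sum_ite, hfixB, h3, h4]
  simp only [Finset.sum_const_zero, ← hs]
  ring

open Classical in
lemma sum_fixx [Fintype I] (iB : I) (r : I → J → ℝ) (b : J → ℝ)
    (x : I → J → ℝ) (j : J) :
    ∑ i : I, fixx iB r b x i j = ∑ i : I, x i j := by
  have := sum_w_fixx iB r b x j (fun _ => 1)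
  simpa using this

open Classical in
lemma fixx_nonneg [Fintype I] (iB : I) (r : I → J → ℝ) (b : J → ℝ)
    (x : I → J → ℝ) (hx : ∀ i j, 0 ≤ x i j) (i : I) (j : J) :
    0 ≤ fixx iB r b x i j := by
  unfold fixx
  split_ifs
  all_goals first
    | exact add_nonneg (hx _ _) (Finset.sum_nonneg fun i' _ => hx _ _)
    | exact le_rfl
    | exact hx _ _

open Classical in
lemma fixx_le [Fintype I] (iB : I) (r : I → J → ℝ) (b : J → ℝ)
    (x : I → J → ℝ) (hx : ∀ i j, 0 ≤ x i j) {i : I} (hi : i ≠ iB) (j : J) :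
    fixx iB r b x i j ≤ x i j := by
  unfold fixx
  rw [if_neg hi]
  split_ifs with h
  · exact hx i j
  · exact le_rfl

open Classical in
lemma fixx_iB_le_one [Fintype I] (iB : I) (r : I → J → ℝ) (b : J → ℝ)
    (x : I → J → ℝ) (hx : ∀ i j, 0 ≤ x i j) (j : J)
    (hsum : ∑ i : I, x i j = 1) :
    fixx iB r b x iB j ≤ 1 := by
  have h1 : fixx iB r b x iB j
      = x iB j + ∑ i' ∈ (Finset.univ.erase iB).filter (fun i' => b j < r i' j), x i' j := by
    simp [fixx]
  have h2 : ∑ i' ∈ (Finset.univ.erase iB).filter (fun i' => b j < r i' j), x i' j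
      ≤ ∑ i' ∈ Finset.univ.erase iB, x i' j :=
    Finset.sum_le_sum_of_subset_of_nonneg (Finset.filter_subset _ _)
      (fun i _ _ => hx i j)
  have h3 := Finset.add_sum_erase Finset.univ (fun i' => x i' j) (Finset.mem_univ iB)
  rw [hsum] at h3
  linarith

lemma fixx_feasBase [Fintype I] [Fintype J] (iB : I) (D : ℕ) (f : J → ℝ)
    (cap : I → (I → ℕ → Bool) → ℝ) (r : I → J → ℝ) (b : J → ℝ)
    (hf : ∀ j, 0 ≤ f j) (x : I → J → ℝ) (y : I → ℕ → Bool)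
    (h : FeasBase iB D f cap x y) :
    FeasBase iB D f cap (fixx iB r b x) y := by
  obtain ⟨hsum, hbd, hord, hcap, hB⟩ := h
  have hx : ∀ i j, 0 ≤ x i j := fun i j => (hbd i j).1
  refine ⟨?_, ?_, hord, ?_, hB⟩
  · intro j; rw [sum_fixx]; exact hsum j
  · intro i j
    refine ⟨fixx_nonneg iB r b x hx i j, ?_⟩
    by_cases hi : i = iB
    · rw [hi, hB, if_pos rfl]
      exact fixx_iB_le_one iB r b x hx j (hsum j)
    · exact (fixx_le iB r b x hx hi j).trans (hbd i j).2
  · intro i hi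
    calc ∑ j : J, f j * fixx iB r b x i j
        ≤ ∑ j : J, f j * x i j :=
          Finset.sum_le_sum fun j _ =>
            mul_le_mul_of_nonneg_left (fixx_le iB r b x hx hi j) (hf j)
      _ ≤ cap i y := hcap i hi

open Classical in
lemma sum_r_fixx_le [Fintype I] (iB : I) (r : I → J → ℝ) (b : J → ℝ)
    (hb : ∀ j, b j = r iB j) (x : I → J → ℝ) (hx : ∀ i j, 0 ≤ x i j) (j : J) :
    ∑ i : I, r i j * fixx iB r b x i j ≤ ∑ i : I, r i j * x i j := by
  rw [sum_w_fixx iB r b x j (fun i => r i j)]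
  have h : ∑ i' ∈ (Finset.univ.erase iB).filter (fun i' => b j < r i' j),
      (r iB j - r i' j) * x i' j ≤ 0 := by
    refine Finset.sum_nonpos fun i hi => ?_
    have hlt : b j < r i j := (Finset.mem_filter.mp hi).2
    have : r iB j - r i j ≤ 0 := by rw [← hb j]; linarith
    exact mul_nonpos_of_nonpos_of_nonneg this (hx i j)
  linarith

open Classical in
lemma sum_t_fixx [Fintype I] (iB : I) (r : I → J → ℝ) (b : J → ℝ)
    (hb : ∀ j, b j = r iB j) (x : I → J → ℝ) (j : J) :
    ∑ i : I, max (b j - r i j) 0 * fixx iB r b x i j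
      = ∑ i : I, max (b j - r i j) 0 * x i j := by
  rw [sum_w_fixx iB r b x j (fun i => max (b j - r i j) 0)]
  have h : ∑ i' ∈ (Finset.univ.erase iB).filter (fun i' => b j < r i' j),
      (max (b j - r iB j) 0 - max (b j - r i' j) 0) * x i' j = 0 := by
    refine Finset.sum_eq_zero fun i hi => ?_
    have hlt : b j < r i j := (Finset.mem_filter.mp hi).2
    have h1 : max (b j - r iB j) 0 = 0 := by rw [← hb j]; simp
    have h2 : max (b j - r i j) 0 = 0 := max_eq_right (by linarith)
    rw [h1, h2]; ring
  rw [h, add_zero]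

open Classical in
lemma fixx_t_compl [Fintype I] (iB : I) (r : I → J → ℝ) (b : J → ℝ)
    (hb : ∀ j, b j = r iB j) (x : I → J → ℝ)
    (hsum : ∀ j, ∑ i : I, x i j = 1) (j : J) :
    ∑ i : I, max (b j - r i j) 0 * fixx iB r b x i j
      = b j - ∑ i : I, r i j * fixx iB r b x i j := by
  have key : ∀ i : I, max (b j - r i j) 0 * fixx iB r b x i j
      = (b j - r i j) * fixx iB r b x i j := by
    intro i
    by_cases hi : i = iB
    · have h0 : b j - r i j = 0 := by rw [hi, hb j]; ring
      rw [h0]; simp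
    · unfold fixx
      rw [if_neg hi]
      by_cases hlt : b j < r i j
      · rw [if_pos hlt]; ring
      · rw [if_neg hlt]
        congr 1
        exact max_eq_left (by linarith [not_lt.mp hlt])
  rw [Finset.sum_congr rfl fun i _ => key i]
  have expand : ∑ i : I, (b j - r i j) * fixx iB r b x i j
      = b j * ∑ i : I, fixx iB r b x i j - ∑ i : I, r i j * fixx iB r b x i j := by
    rw [Finset.mul_sum, ← Finset.sum_sub_distrib]
    exact Finset.sum_congr rfl fun i _ => by ring
  rw [expand, sum_fixx, hsum j]
  ring

lemma fixx_imp_compl [Fintype I] [Fintype J] (iB : I) (r : I → J → ℝ) (b : J → ℝ)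
    (hb : ∀ j, b j = r iB j) (x : I → J → ℝ)
    (hsum : ∀ j, ∑ i : I, x i j = 1) :
    avgImp r b (fixx iB r b x)
      = (Fintype.card J : ℝ)⁻¹ * ∑ j : J, b j - avgRT r (fixx iB r b x) := by
  unfold avgImp avgRT
  rw [Finset.sum_congr rfl fun j _ => fixx_t_compl iB r b hb x hsum j,
    Finset.sum_sub_distrib, mul_sub]

lemma RT_to_I [Fintype I] [Fintype J] (iB : I) (D : ℕ) (f : J → ℝ)
    (cap : I → (I → ℕ → Bool) → ℝ) (r : I → J → ℝ) (b : J → ℝ) (γ : ℝ)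
    (hb : ∀ j, b j = r iB j) (hf : ∀ j, 0 ≤ f j)
    (x : I → J → ℝ) (y : I → ℕ → Bool)
    (h : FeasRT iB D f cap r b γ x y) :
    FeasI iB D f cap r b γ (fixx iB r b x) y := by
  obtain ⟨hbase, hrt⟩ := h
  have hx : ∀ i j, 0 ≤ x i j := fun i j => (hbase.2.1 i j).1
  refine ⟨fixx_feasBase iB D f cap r b hf x y hbase, ?_⟩
  have h1 : avgRT r (fixx iB r b x) ≤ avgRT r x := by
    unfold avgRT
    refine mul_le_mul_of_nonneg_left
      (Finset.sum_le_sum fun j _ => sum_r_fixx_le iB r b hb x hx j) ?_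
    positivity
  have h2 := fixx_imp_compl iB r b hb x hbase.1
  linarith

lemma I_to_RT [Fintype I] [Fintype J] (iB : I) (D : ℕ) (f : J → ℝ)
    (cap : I → (I → ℕ → Bool) → ℝ) (r : I → J → ℝ) (b : J → ℝ) (γ : ℝ)
    (hb : ∀ j, b j = r iB j) (hf : ∀ j, 0 ≤ f j)
    (x : I → J → ℝ) (y : I → ℕ → Bool)
    (h : FeasI iB D f cap r b γ x y) :
    FeasRT iB D f cap r b γ (fixx iB r b x) y := by
  obtain ⟨hbase, himp⟩ := h
  refine ⟨fixx_feasBase iB D f cap r b hf x y hbase, ?_⟩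
  have h1 : avgImp r b (fixx iB r b x) = avgImp r b x := by
    unfold avgImp
    rw [Finset.sum_congr rfl fun j _ => sum_t_fixx iB r b hb x j]
  have h2 := fixx_imp_compl iB r b hb x hbase.1
  linarith

end Aux

theorem stmt10 [Fintype I] [Fintype J] [Nonempty J]
    (iB : I) (D : ℕ) (hD : 1 ≤ D)
    (r : I → J → ℝ) (hr : ∀ i j, 0 ≤ r i j)
    (b : J → ℝ) (hb : ∀ j, b j = r iB j)
    (f : J → ℝ) (hf : ∀ j, 0 ≤ f j)
    (cap : I → (I → ℕ → Bool) → ℝ)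
    (hcap : ∀ i (y y' : I → ℕ → Bool),
      (∀ i' d, y i' d = true → y' i' d = true) → cap i y ≤ cap i y')
    (γ : ℝ) :
    ∀ y : I → ℕ → Bool,
      (∃ x, OptRT iB D f cap r b γ x y) ↔ (∃ x, OptI iB D f cap r b γ x y) := by
  intro y
  constructor
  · rintro ⟨x, hfe, hopt⟩
    exact ⟨fixx iB r b x, RT_to_I iB D f cap r b γ hb hf x y hfe,
      fun x' y' h' => hopt (fixx iB r b x') y' (I_to_RT iB D f cap r b γ hb hf x' y' h')⟩
  · rintro ⟨x, hfe, hopt⟩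
    exact ⟨fixx iB r b x, I_to_RT iB D f cap r b γ hb hf x y hfe,
      fun x' y' h' => hopt (fixx iB r b x') y' (RT_to_I iB D f cap r b γ hb hf x' y' h')⟩
end
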